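/- Let F be a field of characteristic p. Let H₁ denote the group, under componentwise multiplication, of coherent G-stable tuples of linear characters with values in F, and let H₂ denote the subgroup of H₁ consisting of those tuples (ψ_P) that additionally satisfy P·C_G(P) ≤ ker(ψ_P) for all p-subgroups P of G. Then the map Hom(G, F^×) × H₂ → H₁ sending (φ, (ψ_P)) to the tuple whose P-component is the product of the restriction of φ to N_G(P) with ψ_P is a group isomorphism. In particular, H₁ ≅ Hom(G, F^×) × H₂. -/

import Mathlib

/-!  Common definitions: representations of finite groups over a commutative ring,
direct summands, permutation modules, vertices, Brauer-type trivial parts, characters,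
p-parts of group elements, coherent tuples.  -/

open scoped TensorProduct

universe u v w

section Defs

variable {k : Type u} [CommSemiring k]

/-- `ρ` is isomorphic to a direct summand of `σ`, equivariantly. -/
def IsSummand {G : Type*} [Monoid G] {V : Type*} [AddCommMonoid V] [Module k V]
    {W : Type*} [AddCommMonoid W] [Module k W]
    (ρ : Representation k G V) (σ : Representation k G W) : Prop :=
  ∃ (i : V →ₗ[k] W) (π : W →ₗ[k] V),
    (∀ g v, i (ρ g v) = σ g (i v)) ∧ (∀ g w, π (σ g w) = ρ g (π w)) ∧ ∀ v, π (i v) = v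

/-- equivariant isomorphism of representations -/
def RepEquiv {G : Type*} [Monoid G] {V : Type*} [AddCommMonoid V] [Module k V]
    {W : Type*} [AddCommMonoid W] [Module k W]
    (ρ : Representation k G V) (σ : Representation k G W) : Prop :=
  ∃ e : V ≃ₗ[k] W, ∀ g v, e (ρ g v) = σ g (e v)

/-- the direct sum of two representations -/
def prodRep {G : Type*} [Monoid G] {V : Type*} [AddCommMonoid V] [Module k V]
    {W : Type*} [AddCommMonoid W] [Module k W]
    (ρ : Representation k G V) (σ : Representation k G W) :
    Representation k G (V × W) where
  toFun g := (ρ g).prodMap (σ g)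
  map_one' := by apply LinearMap.ext; intro v; simp
  map_mul' g h := by apply LinearMap.ext; intro v; simp

/-- the permutation representation attached to an action of `G` on `X` by permutations -/
def permRep {G : Type*} [Group G] (X : Type*) (a : G →* Equiv.Perm X) :
    Representation k G (X → k) where
  toFun g := LinearMap.funLeft k k (a g⁻¹)
  map_one' := by apply LinearMap.ext; intro f; simp [LinearMap.funLeft]
  map_mul' g h := by
    apply LinearMap.ext; intro f; funext x
    simp [LinearMap.funLeft, mul_inv_rev]

/-- a p-permutation module over `k`: a module isomorphic to a direct summand of a
permutation module `k[X]` for a finite `G`-set `X` -/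
def IsPermutationSummand {G : Type*} [Group G] {V : Type*} [AddCommMonoid V] [Module k V]
    (ρ : Representation k G V) : Prop :=
  ∃ (X : Type u) (a : G →* Equiv.Perm X), Finite X ∧ IsSummand ρ (permRep X a)

/-- an indecomposable representation: nonzero, and every equivariant idempotent
endomorphism is `0` or the identity -/
def IsIndecomposableRep {G : Type*} [Monoid G] {V : Type*} [AddCommMonoid V] [Module k V]
    (ρ : Representation k G V) : Prop :=
  (∃ v : V, v ≠ 0) ∧ ∀ f : V →ₗ[k] V,
    (∀ g v, f (ρ g v) = ρ g (f v)) → (∀ v, f (f v) = f v) →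
      (∀ v, f v = 0) ∨ (∀ v, f v = v)

/-- the carrier of the induced module `Ind_H^G (Res_H^G ρ)`:
functions `f : G → V` with `f (h * g) = ρ h (f g)` for `h ∈ H` -/
def indResCarrier {G : Type*} [Group G] {V : Type*} [AddCommMonoid V] [Module k V]
    (ρ : Representation k G V) (H : Subgroup G) : Submodule k (G → V) where
  carrier := {f | ∀ (h : H) (g : G), f (↑h * g) = ρ ↑h (f g)}
  add_mem' := by
    intro f g hf hg h x
    simp only [Pi.add_apply, hf h x, hg h x, map_add]
  zero_mem' := by intro h x; simp
  smul_mem' := by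
    intro c f hf h x
    simp only [Pi.smul_apply, hf h x, map_smul]

/-- the representation `Ind_H^G (Res_H^G ρ)`, with `G` acting by right translation -/
def indResRep {G : Type*} [Group G] {V : Type*} [AddCommMonoid V] [Module k V]
    (ρ : Representation k G V) (H : Subgroup G) :
    Representation k G (indResCarrier ρ H) where
  toFun g :=
    { toFun := fun f => ⟨fun x => (f : G → V) (x * g), fun h x => by
        simpa [mul_assoc] using f.2 h (x * g)⟩
      map_add' := fun f₁ f₂ => rfl
      map_smul' := fun c f => rfl }
  map_one' := by
    apply LinearMap.ext; intro f; apply Subtype.ext; funext x; simp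
  map_mul' g₁ g₂ := by
    apply LinearMap.ext; intro f; apply Subtype.ext; funext x
    show (f : G → V) (x * (g₁ * g₂)) = (f : G → V) (x * g₁ * g₂)
    rw [mul_assoc]

/-- `ρ` is relatively `H`-projective in the sense that it is a direct summand of
`Ind_H^G (Res_H^G ρ)` -/
def IsRelativelyProjective {G : Type*} [Group G] {V : Type*} [AddCommMonoid V] [Module k V]
    (ρ : Representation k G V) (H : Subgroup G) : Prop :=
  IsSummand ρ (indResRep ρ H)

/-- `Q` is a vertex of `ρ`: minimal among the subgroups `R` with
`ρ` a direct summand of `Ind_R^G (Res_R^G ρ)` -/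
def IsVertex {G : Type*} [Group G] {V : Type*} [AddCommMonoid V] [Module k V]
    (ρ : Representation k G V) (Q : Subgroup G) : Prop :=
  IsRelativelyProjective ρ Q ∧ ∀ R : Subgroup G, R < Q → ¬ IsRelativelyProjective ρ R

end Defs

/-- a bundled representation of `G` over `k` -/
structure RepOn (k : Type u) (G : Type v) [CommSemiring k] [Monoid G] :
    Type (max (u + 1) v) where
  carrier : Type u
  [isAddCommGroup : AddCommGroup carrier]
  [isModule : Module k carrier]
  ρ : Representation k G carrier

attribute [instance] RepOn.isAddCommGroup RepOn.isModule

section Defs2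

variable {k : Type u} [CommSemiring k]

/-- the subgroup `P` acts trivially on the representation `σ` -/
def TrivialOn {Γ : Type*} [Group Γ] {V : Type*} [AddCommMonoid V] [Module k V]
    (σ : Representation k Γ V) (P : Subgroup Γ) : Prop :=
  ∀ x ∈ P, ∀ v : V, σ x v = v

/-- `A` is a `P`-trivial part of `σ`: `σ ≅ A ⊕ B` where `P` acts trivially on `A` and
no nonzero direct summand of `B` has trivial `P`-action -/
def IsTrivialPartFor {Γ : Type v} [Group Γ] {V : Type*} [AddCommMonoid V] [Module k V]
    (σ : Representation k Γ V) (P : Subgroup Γ) (A : RepOn k Γ) : Prop :=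
  TrivialOn A.ρ P ∧
  ∃ B : RepOn k Γ, RepEquiv σ (prodRep A.ρ B.ρ) ∧
    ∀ U : RepOn k Γ, IsSummand U.ρ B.ρ → TrivialOn U.ρ P → ∀ u : U.carrier, u = 0

/-- `A` is a `P`-trivial part `M_P` of `ρ`: a direct summand of
`Res^G_{N_G(P)} ρ` with trivial `P`-action whose complement has no nonzero direct
summand with trivial `P`-action -/
def IsPTrivialPart {G : Type v} [Group G] {V : Type*} [AddCommMonoid V] [Module k V]
    (ρ : Representation k G V) (P : Subgroup G) (A : RepOn k ↥(Subgroup.normalizer (P : Set G))) : Prop :=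
  IsTrivialPartFor (ρ.comp (Subgroup.normalizer (P : Set G)).subtype) (P.subgroupOf (Subgroup.normalizer (P : Set G))) A

end Defs2

/-- the character value at `x` of the `K ⊗ₖ -` base change of the representation `σ` -/
noncomputable def charAt {k : Type u} [CommRing k] (K : Type v) [CommRing K] [Algebra k K]
    {Γ : Type*} [Monoid Γ] {V : Type*} [AddCommGroup V] [Module k V]
    (σ : Representation k Γ V) (x : Γ) : K :=
  LinearMap.trace K (TensorProduct k K V) (LinearMap.baseChange K (σ x))

/-- the `p`-part of a group element (of finite order) -/
noncomputable def pPart (p : ℕ) {G : Type*} [Group G] (x : G) : G :=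
  x ^ ((orderOf x / p ^ (orderOf x).factorization p) *
    (((orderOf x / p ^ (orderOf x).factorization p : ℕ) :
        ZMod (p ^ (orderOf x).factorization p))⁻¹).val)

/-- the `p'`-part of a natural number -/
def pPrimePart (p n : ℕ) : ℕ := n / p ^ n.factorization p

/-- the conjugate subgroup `g P g⁻¹` -/
def conjSubgroup {G : Type*} [Group G] (g : G) (P : Subgroup G) : Subgroup G :=
  Subgroup.map (MulAut.conj g).toMonoidHom P

/-- `(ρM, ρN)` is an orthogonal unit pair:
`(M ⊗ M°) ⊕ (N ⊗ N°) ≅ k ⊕ (M ⊗ N°) ⊕ (N ⊗ M°)` equivariantly, i.e.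
`[M] - [N]` is an orthogonal unit of the trivial source ring -/
def IsOrthogonalUnitPair {k : Type u} [CommRing k] {G : Type v} [Group G]
    {V : Type*} [AddCommGroup V] [Module k V] {W : Type*} [AddCommGroup W] [Module k W]
    (ρM : Representation k G V) (ρN : Representation k G W) : Prop :=
  RepEquiv (prodRep (ρM.tprod ρM.dual) (ρN.tprod ρN.dual))
    (prodRep (Representation.trivial k (G := G) (V := k)) (prodRep (ρM.tprod ρN.dual) (ρN.tprod ρM.dual)))

/-- the type of `p`-subgroups of `G` -/
def pSubgroup (p : ℕ) (G : Type*) [Group G] : Type _ := {P : Subgroup G // IsPGroup p ↥P}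

/-- a coherent `G`-stable tuple of linear characters:
`P ≤ ker φ_P`, `G`-stability, and the coherence condition
`φ_P(x) = φ_{P⟨x_p⟩}(x)` for `x ∈ N_G(P)` -/
def CoherentPred (p : ℕ) {G : Type*} [Group G] {L : Type*} [CommMonoid L]
    (φ : ∀ P : pSubgroup p G, ↥(Subgroup.normalizer (P.1 : Set G)) →* Lˣ) : Prop :=
  (∀ (P : pSubgroup p G) (x : G) (hx : x ∈ P.1),
      φ P ⟨x, Subgroup.le_normalizer hx⟩ = 1) ∧
  (∀ (P Q : pSubgroup p G) (g x : G) (hx : x ∈ (Subgroup.normalizer (P.1 : Set G))),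
      Q.1 = conjSubgroup g P.1 → ∀ (hx' : g * x * g⁻¹ ∈ (Subgroup.normalizer (Q.1 : Set G))),
      φ Q ⟨g * x * g⁻¹, hx'⟩ = φ P ⟨x, hx⟩) ∧
  (∀ (P Q : pSubgroup p G) (x : G) (hx : x ∈ (Subgroup.normalizer (P.1 : Set G))),
      Q.1 = P.1 ⊔ Subgroup.zpowers (pPart p x) → ∀ (hx' : x ∈ (Subgroup.normalizer (Q.1 : Set G))),
      φ P ⟨x, hx⟩ = φ Q ⟨x, hx'⟩)

/-- the group of coherent `G`-stable tuples of linear characters with values in `L` -/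
def coherentTuples (p : ℕ) (G : Type w) [Group G] (L : Type v) [CommMonoid L] :
    Subgroup (∀ P : pSubgroup p G, ↥(Subgroup.normalizer (P.1 : Set G)) →* Lˣ) where
  carrier := {φ | CoherentPred p φ}
  one_mem' := ⟨fun _ _ _ => rfl, fun _ _ _ _ _ _ _ => rfl, fun _ _ _ _ _ _ => rfl⟩
  mul_mem' := by
    intro a b ha hb
    refine ⟨fun P x hx => ?_, fun P Q g x hx hQ hx' => ?_, fun P Q x hx hQ hx' => ?_⟩
    · show a P _ * b P _ = 1
      rw [ha.1 P x hx, hb.1 P x hx, mul_one]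
    · show a Q _ * b Q _ = a P _ * b P _
      rw [ha.2.1 P Q g x hx hQ hx', hb.2.1 P Q g x hx hQ hx']
    · show a P _ * b P _ = a Q _ * b Q _
      rw [ha.2.2 P Q x hx hQ hx', hb.2.2 P Q x hx hQ hx']
  inv_mem' := by
    intro a ha
    refine ⟨fun P x hx => ?_, fun P Q g x hx hQ hx' => ?_, fun P Q x hx hQ hx' => ?_⟩
    · show (a P _)⁻¹ = 1
      rw [ha.1 P x hx, inv_one]
    · show (a Q _)⁻¹ = (a P _)⁻¹
      rw [ha.2.1 P Q g x hx hQ hx']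
    · show (a P _)⁻¹ = (a Q _)⁻¹
      rw [ha.2.2 P Q x hx hQ hx']

/-- the group of coherent `G`-stable tuples `(ψ_P)` of linear characters which
additionally satisfy `P ⬝ C_G(P) ≤ ker ψ_P` for all `p`-subgroups `P` -/
def coherentTuplesCent (p : ℕ) (G : Type w) [Group G] (L : Type v) [CommMonoid L] :
    Subgroup (∀ P : pSubgroup p G, ↥(Subgroup.normalizer (P.1 : Set G)) →* Lˣ) where
  carrier := {φ | CoherentPred p φ ∧
    ∀ (P : pSubgroup p G) (x : G),
      x ∈ P.1 ⊔ Subgroup.centralizer (P.1 : Set G) →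
      ∀ hx : x ∈ (Subgroup.normalizer (P.1 : Set G)), φ P ⟨x, hx⟩ = 1}
  one_mem' := ⟨(coherentTuples p G L).one_mem', fun _ _ _ _ => rfl⟩
  mul_mem' := by
    intro a b ha hb
    refine ⟨(coherentTuples p G L).mul_mem' ha.1 hb.1, fun P x hxc hx => ?_⟩
    show a P _ * b P _ = 1
    rw [ha.2 P x hxc hx, hb.2 P x hxc hx, mul_one]
  inv_mem' := by
    intro a ha
    refine ⟨(coherentTuples p G L).inv_mem' ha.1, fun P x hxc hx => ?_⟩
    show (a P _)⁻¹ = 1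
    rw [ha.2 P x hxc hx, inv_one]

/-!
Restricting a character `φ` of `G` to the normalizers gives a coherent tuple, and the inverse
map sends `χ` to `(χ₁, χ · χ₁⁻¹)`, where `χ₁` is the component at the trivial subgroup. What
has to be shown is that a coherent tuple agrees with `χ₁` on `P · C_G(P)`. Characters into a
reduced ring of characteristic `p` kill elements of `p`-power order, so it suffices to treat a
`p'`-element `d` centralizing `P`. Since `P` satisfies the normalizer condition, it is reached
from `1` by steps `R < R ⟨u⟩` with `u ∈ P` normalizing `R`, and coherence at `u * d`, whose
`p`-part is `u`, gives `χ_R(d) = χ_{R⟨u⟩}(d)` at each step.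
-/

theorem Units.eq_one_of_pow_expChar_pow_eq_one {R : Type*} [CommRing R] [IsReduced R] {p : ℕ}
    [ExpChar R p] {a : Rˣ} {k : ℕ} (h : a ^ p ^ k = 1) : a = 1 :=
  Units.ext <| iterateFrobenius_inj R p k <| by
    simpa [iterateFrobenius_def] using congrArg Units.val h

theorem MonoidHom.map_eq_one_of_pow_expChar_pow_eq_one {R : Type*} [CommRing R] [IsReduced R]
    {p : ℕ} [ExpChar R p] {H : Type*} [Monoid H] (χ : H →* Rˣ) {x : H} {k : ℕ}
    (hx : x ^ p ^ k = 1) : χ x = 1 :=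
  Units.eq_one_of_pow_expChar_pow_eq_one (by rw [← map_pow, hx, map_one])

section PPart

variable {p : ℕ} [Fact p.Prime] {G : Type*} [Group G]

theorem exists_pPart_eq_pow {x : G} (hx : IsOfFinOrder x) :
    ∃ k m N : ℕ, orderOf x = p ^ k * m ∧ m.Coprime p ∧ m ∣ N ∧ N ≡ 1 [MOD p ^ k] ∧
      pPart p x = x ^ N := by
  set k := (orderOf x).factorization p
  set m := orderOf x / p ^ k
  have hm : m.Coprime p :=
    (Nat.coprime_ordCompl Fact.out hx.orderOf_pos.ne').symm
  refine ⟨k, m, m * ((m : ZMod (p ^ k))⁻¹).val,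
    (Nat.ordProj_mul_ordCompl_eq_self _ p).symm, hm, dvd_mul_right _ _, ?_, rfl⟩
  rw [← ZMod.natCast_eq_natCast_iff, Nat.cast_mul, ZMod.natCast_val, ZMod.cast_id, Nat.cast_one]
  exact ZMod.coe_mul_inv_eq_one m (hm.pow_right k)

theorem exists_pPart_pow_prime_pow_eq_one {x : G} (hx : IsOfFinOrder x) :
    ∃ k, pPart p x ^ p ^ k = 1 := by
  obtain ⟨k, m, N, hord, -, hmN, -, hx⟩ := exists_pPart_eq_pow (p := p) hx
  refine ⟨k, ?_⟩
  rw [hx, ← pow_mul, ← orderOf_dvd_iff_pow_eq_one, hord, mul_comm N]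
  exact mul_dvd_mul_left _ hmN

theorem coprime_orderOf_inv_pPart_mul {x : G} (hx : IsOfFinOrder x) :
    (orderOf ((pPart p x)⁻¹ * x)).Coprime p := by
  obtain ⟨k, m, N, hord, hm, -, hN, hx⟩ := exists_pPart_eq_pow (p := p) hx
  refine Nat.Coprime.coprime_dvd_left (orderOf_dvd_of_pow_eq_one ?_) hm
  have hpow : x ^ (N * m) = x ^ (1 * m) :=
    pow_eq_pow_iff_modEq.mpr (hord ▸ hN.mul_right' m)
  rw [hx, ((Commute.refl x).pow_left N).inv_left.mul_pow, inv_pow, ← pow_mul, hpow, one_mul,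
    inv_mul_cancel]

theorem pPart_mul_of_commute {u d : G} (hud : Commute u d) {a : ℕ} (hu : u ^ p ^ a = 1)
    (hd : (orderOf d).Coprime p) : pPart p (u * d) = u := by
  obtain ⟨b, -, hub⟩ := (Nat.dvd_prime_pow Fact.out).mp (orderOf_dvd_of_pow_eq_one hu)
  have hcop : (orderOf u).Coprime (orderOf d) := hub ▸ hd.symm.pow_left b
  have hfin : IsOfFinOrder (u * d) := by
    rw [← orderOf_pos_iff, hud.orderOf_mul_eq_mul_orderOf_of_coprime hcop, hub]
    refine Nat.mul_pos (pow_pos (Fact.out : p.Prime).pos b) (Nat.pos_of_ne_zero fun h => ?_)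
    exact (Fact.out : p.Prime).ne_one (Nat.coprime_zero_left p |>.mp (h ▸ hd))
  obtain ⟨k, m, N, hord, hm, hmN, hN, hx⟩ := exists_pPart_eq_pow (p := p) hfin
  rw [hud.orderOf_mul_eq_mul_orderOf_of_coprime hcop] at hord
  have hd1 : d ^ N = 1 := by
    refine orderOf_dvd_iff_pow_eq_one.mp (dvd_trans ?_ hmN)
    exact (hd.pow_right k).dvd_of_dvd_mul_left (hord ▸ dvd_mul_left _ _)
  have hu1 : u ^ N = u ^ 1 := by
    refine pow_eq_pow_iff_modEq.mpr (hN.of_dvd ?_)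
    exact (hub ▸ hm.symm.pow_left b).dvd_of_dvd_mul_right (hord ▸ dvd_mul_right _ _)
  rw [hx, hud.mul_pow, hd1, hu1, pow_one, mul_one]

end PPart

namespace Subgroup

variable {G : Type*} [Group G]

theorem exists_mem_normalizer_notMem_of_lt {R P : Subgroup G} [Group.IsNilpotent P] (h : R < P) :
    ∃ u ∈ P, u ∉ R ∧ u ∈ normalizer (R : Set G) := by
  have hlt : R.subgroupOf P < ⊤ :=
    lt_top_iff_ne_top.mpr fun htop => h.not_ge (subgroupOf_eq_top.mp htop)
  have := Group.normalizerCondition_of_isNilpotent _ hlt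
  rw [← subgroupOf_normalizer_eq h.le] at this
  obtain ⟨u, hu, hR⟩ := SetLike.exists_of_lt this
  exact ⟨u, u.2, hR, hu⟩

theorem induction_sup_zpowers [Finite G] {P : Subgroup G} [Group.IsNilpotent P]
    {motive : Subgroup G → Prop} (bot : motive ⊥)
    (sup_zpowers : ∀ R ≤ P, ∀ u ∈ P, u ∈ normalizer (R : Set G) → motive R →
      motive (R ⊔ zpowers u)) :
    motive P := by
  suffices ∀ R, R ≤ P → motive R → motive P from this ⊥ bot_le bot
  intro R
  induction R using WellFoundedGT.induction with
  | _ R ih =>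
    intro hRP hR
    obtain rfl | hlt := hRP.eq_or_lt
    · exact hR
    obtain ⟨u, huP, huR, hun⟩ := exists_mem_normalizer_notMem_of_lt hlt
    have hu : u ∈ R ⊔ zpowers u := mem_sup_right (mem_zpowers u)
    exact ih _ (lt_of_le_of_ne le_sup_left fun h => huR (h ▸ hu))
      (sup_le hRP (zpowers_le.mpr huP)) (sup_zpowers R hRP u huP hun hR)

end Subgroup

namespace pSubgroup

variable {p : ℕ} {G : Type*} [Group G]

instance : Bot (pSubgroup p G) := ⟨⟨⊥, IsPGroup.of_bot⟩⟩

theorem mem_normalizer_bot (g : G) : g ∈ Subgroup.normalizer ((⊥ : pSubgroup p G).1 : Set G) :=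
  Subgroup.normalizer_eq_top (⊥ : Subgroup G) ▸ Subgroup.mem_top g

theorem exists_pow_eq_one (P : pSubgroup p G) {x : G} (hx : x ∈ P.1) : ∃ k, x ^ p ^ k = 1 := by
  obtain ⟨k, hk⟩ := P.2 ⟨x, hx⟩
  exact ⟨k, congrArg Subtype.val hk⟩

end pSubgroup

abbrev CharTuple (p : ℕ) (G : Type*) [Group G] (L : Type*) [CommMonoid L] :=
  ∀ P : pSubgroup p G, ↥(Subgroup.normalizer (P.1 : Set G)) →* Lˣ

namespace CharTuple

variable {p : ℕ} {G : Type*} [Group G]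

section CommMonoid

variable {L : Type*} [CommMonoid L]

variable (p G L) in
def restrict : (G →* Lˣ) →* CharTuple p G L where
  toFun φ P := φ.comp (Subgroup.normalizer (P.1 : Set G)).subtype
  map_one' := rfl
  map_mul' _ _ := rfl

def baseChar : CharTuple p G L →* (G →* Lˣ) where
  toFun χ := (χ ⊥).comp ((MonoidHom.id G).codRestrict _ pSubgroup.mem_normalizer_bot)
  map_one' := rfl
  map_mul' _ _ := rfl

theorem baseChar_restrict (φ : G →* Lˣ) : baseChar (restrict p G L φ) = φ := rfl

theorem baseChar_eq_one_of_mem_coherentTuplesCent {ψ : CharTuple p G L}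
    (hψ : ψ ∈ coherentTuplesCent p G L) : baseChar ψ = 1 :=
  MonoidHom.ext fun g => hψ.2 ⊥ g
    (Subgroup.mem_sup_right (Subgroup.mem_centralizer_iff.mpr fun h hh => by
      rw [Subgroup.mem_bot.mp hh, one_mul, mul_one])) _

end CommMonoid

theorem restrict_mem_coherentTuples {L : Type*} [CommRing L] [IsReduced L] [ExpChar L p]
    (φ : G →* Lˣ) : restrict p G L φ ∈ coherentTuples p G L := by
  refine ⟨fun P x hx => ?_, fun _ _ g x _ _ _ => ?_, fun _ _ _ _ _ _ => rfl⟩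
  · obtain ⟨k, hk⟩ := P.exists_pow_eq_one hx
    exact φ.map_eq_one_of_pow_expChar_pow_eq_one hk
  · change φ (g * x * g⁻¹) = φ x
    rw [map_mul, map_mul, map_inv, mul_inv_cancel_comm]

end CharTuple

namespace CoherentPred

open CharTuple

variable {p : ℕ} [Fact p.Prime] {G : Type*} [Group G]
  {L : Type*} [CommRing L] [IsReduced L] [ExpChar L p] {χ : CharTuple p G L}

theorem apply_eq_of_eq_sup_zpowers (hχ : CoherentPred p χ) {R Q : pSubgroup p G} {u d : G}
    (hQ : Q.1 = R.1 ⊔ Subgroup.zpowers u) {a : ℕ} (hu : u ^ p ^ a = 1)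
    (huR : u ∈ Subgroup.normalizer (R.1 : Set G)) (hud : Commute u d) (hd : (orderOf d).Coprime p)
    (hdR : d ∈ Subgroup.normalizer (R.1 : Set G)) (hdQ : d ∈ Subgroup.normalizer (Q.1 : Set G)) :
    χ R ⟨d, hdR⟩ = χ Q ⟨d, hdQ⟩ := by
  have huQ : u ∈ Subgroup.normalizer (Q.1 : Set G) :=
    Subgroup.le_normalizer (hQ ▸ Subgroup.mem_sup_right (Subgroup.mem_zpowers u))
  have h := hχ.2.2 R Q (u * d) (mul_mem huR hdR) (by rw [pPart_mul_of_commute hud hu hd]; exact hQ)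
    (mul_mem huQ hdQ)
  change χ R (⟨u, huR⟩ * ⟨d, hdR⟩) = χ Q (⟨u, huQ⟩ * ⟨d, hdQ⟩) at h
  rwa [map_mul, map_mul, (χ R).map_eq_one_of_pow_expChar_pow_eq_one (Subtype.ext hu : _ = _),
    (χ Q).map_eq_one_of_pow_expChar_pow_eq_one (Subtype.ext hu : _ = _), one_mul, one_mul] at h

theorem apply_eq_baseChar_of_coprime [Finite G] (hχ : CoherentPred p χ) (P : pSubgroup p G)
    {d : G} (hdP : d ∈ Subgroup.centralizer (P.1 : Set G)) (hd : (orderOf d).Coprime p)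
    (hdn : d ∈ Subgroup.normalizer (P.1 : Set G)) : χ P ⟨d, hdn⟩ = baseChar χ d := by
  have := P.2.isNilpotent
  refine Subgroup.induction_sup_zpowers (P := P.1) (motive := fun R => R ≤ P.1 →
    ∀ (hR : IsPGroup p R) (hdR : d ∈ Subgroup.normalizer (R : Set G)),
      χ ⟨R, hR⟩ ⟨d, hdR⟩ = baseChar χ d) (fun _ _ _ => rfl) ?_ le_rfl P.2 hdn
  intro R hRP u huP huR ih hQP hQ hdQ
  have hdC := Subgroup.centralizer_le (SetLike.coe_subset_coe.mpr hRP) hdP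
  obtain ⟨a, hu⟩ := P.exists_pow_eq_one huP
  rw [← ih hRP (hQ.to_le le_sup_left) (Subgroup.centralizer_le_normalizer _ hdC)]
  exact (hχ.apply_eq_of_eq_sup_zpowers (R := ⟨R, _⟩) (Q := ⟨_, hQ⟩) rfl hu huR
    (Subgroup.mem_centralizer_iff.mp hdP u huP) hd _ hdQ).symm

theorem apply_eq_baseChar_of_mem_centralizer [Finite G] (hχ : CoherentPred p χ)
    (P : pSubgroup p G) {c : G} (hc : c ∈ Subgroup.centralizer (P.1 : Set G))
    (hcn : c ∈ Subgroup.normalizer (P.1 : Set G)) : χ P ⟨c, hcn⟩ = baseChar χ c := by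
  have hfin := isOfFinOrder_of_finite c
  obtain ⟨k, hv⟩ := exists_pPart_pow_prime_pow_eq_one (p := p) hfin
  set v := pPart p c
  have hvC : v ∈ Subgroup.centralizer (P.1 : Set G) := Subgroup.pow_mem _ hc _
  have hdC : v⁻¹ * c ∈ Subgroup.centralizer (P.1 : Set G) := mul_mem (inv_mem hvC) hc
  have hvn := Subgroup.centralizer_le_normalizer _ hvC
  have hdn := Subgroup.centralizer_le_normalizer _ hdC
  calc χ P ⟨c, hcn⟩ = χ P ⟨v, hvn⟩ * χ P ⟨v⁻¹ * c, hdn⟩ := by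
        rw [← map_mul]; exact congrArg _ (Subtype.ext (mul_inv_cancel_left v c).symm)
    _ = baseChar χ v * baseChar χ (v⁻¹ * c) := by
        rw [(χ P).map_eq_one_of_pow_expChar_pow_eq_one (Subtype.ext hv : _ = _),
          (baseChar χ).map_eq_one_of_pow_expChar_pow_eq_one hv,
          hχ.apply_eq_baseChar_of_coprime P hdC (coprime_orderOf_inv_pPart_mul hfin) hdn]
    _ = baseChar χ c := by rw [← map_mul, mul_inv_cancel_left]

theorem apply_eq_baseChar [Finite G] (hχ : CoherentPred p χ) (P : pSubgroup p G) {x : G}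
    (hx : x ∈ P.1 ⊔ Subgroup.centralizer (P.1 : Set G))
    (hxn : x ∈ Subgroup.normalizer (P.1 : Set G)) : χ P ⟨x, hxn⟩ = baseChar χ x := by
  have hle : P.1 ⊔ Subgroup.centralizer (P.1 : Set G) ≤
      ((χ P).eqLocus ((baseChar χ).comp (Subgroup.normalizer (P.1 : Set G)).subtype)).map
        (Subgroup.normalizer (P.1 : Set G)).subtype := by
    refine sup_le (fun a ha => ⟨⟨a, Subgroup.le_normalizer ha⟩, ?_, rfl⟩)
      fun c hc => ⟨⟨c, Subgroup.centralizer_le_normalizer _ hc⟩,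
        hχ.apply_eq_baseChar_of_mem_centralizer P hc _, rfl⟩
    obtain ⟨k, hk⟩ := P.exists_pow_eq_one ha
    exact (hχ.1 P a ha).trans ((baseChar χ).map_eq_one_of_pow_expChar_pow_eq_one hk).symm
  obtain ⟨⟨y, _⟩, hy, rfl⟩ := hle hx
  exact hy

end CoherentPred

namespace CharTuple

variable {p : ℕ} {G : Type*} [Group G] {L : Type*} [CommRing L] [IsReduced L] [ExpChar L p]

theorem mul_inv_restrict_baseChar_mem [Fact p.Prime] [Finite G] {χ : CharTuple p G L}
    (hχ : χ ∈ coherentTuples p G L) :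
    χ * (restrict p G L (baseChar χ))⁻¹ ∈ coherentTuplesCent p G L :=
  ⟨(coherentTuples p G L).mul_mem hχ
      ((coherentTuples p G L).inv_mem (restrict_mem_coherentTuples _)),
    fun P x hx hxn => by
      change χ P ⟨x, hxn⟩ * (baseChar χ x)⁻¹ = 1
      rw [CoherentPred.apply_eq_baseChar hχ P hx hxn, mul_inv_cancel]⟩

variable (p G L) in
def restrictMul : (G →* Lˣ) × coherentTuplesCent p G L →* coherentTuples p G L :=
  ((restrict p G L).codRestrict _ restrict_mem_coherentTuples).coprod
    (Subgroup.inclusion fun _ hψ => hψ.1)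

theorem restrictMul_injective : Function.Injective (restrictMul p G L) := by
  refine (injective_iff_map_eq_one _).mpr fun ⟨φ, ψ⟩ h => ?_
  have h' : restrict p G L φ * ψ.1 = 1 := congrArg Subtype.val h
  have hφ : φ = 1 := by
    simpa [baseChar_restrict, baseChar_eq_one_of_mem_coherentTuplesCent ψ.2] using
      congrArg baseChar h'
  subst hφ
  exact Prod.ext rfl (Subtype.ext (by simpa using h'))

theorem restrictMul_surjective [Fact p.Prime] [Finite G] :
    Function.Surjective (restrictMul p G L) := fun χ =>
  ⟨(baseChar χ.1, ⟨_, mul_inv_restrict_baseChar_mem χ.2⟩),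
    Subtype.ext (mul_inv_cancel_comm_assoc _ _)⟩

end CharTuple

theorem statement12 (p : ℕ) [Fact p.Prime]
    (G : Type w) [Group G] [Finite G]
    (F : Type v) [Field F] [CharP F p] :
    ∃ e : ((G →* Fˣ) × ↥(coherentTuplesCent p G F)) ≃* ↥(coherentTuples p G F),
      ∀ (φ : G →* Fˣ) (ψ : ↥(coherentTuplesCent p G F)) (P : pSubgroup p G)
        (x : ↥(Subgroup.normalizer (P.1 : Set G))),
        (e (φ, ψ)).1 P x = φ (x : G) * ψ.1 P x :=
  ⟨MulEquiv.ofBijective (CharTuple.restrictMul p G F)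
    ⟨CharTuple.restrictMul_injective, CharTuple.restrictMul_surjective⟩, fun _ _ _ _ => rfl⟩
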